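/- Under the assumptions of the robust hedging problem (c = σ_F² + Θ_F > 0), the min-max value min_h max_{(a,b)∈U} (a + h²b − 2h·σ_SF) equals (σ_S² + Θ_S) − σ_SF² / (σ_F² + Θ_F). -/
import Mathlib

lemma inner_max (σSF σS2 σF2 ΘS ΘF : ℝ) (hΘS : 0 ≤ ΘS) (hΘF : 0 ≤ ΘF) (h : ℝ) :
    IsGreatest
      {u : ℝ | ∃ a b : ℝ, a ∈ Set.Icc (σS2 - ΘS) (σS2 + ΘS) ∧
        b ∈ Set.Icc (σF2 - ΘF) (σF2 + ΘF) ∧ u = a + h ^ 2 * b - 2 * h * σSF}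
      ((σS2 + ΘS) + h ^ 2 * (σF2 + ΘF) - 2 * h * σSF) := by
  constructor
  · exact ⟨σS2 + ΘS, σF2 + ΘF, ⟨by linarith, le_refl _⟩, ⟨by linarith, le_refl _⟩, rfl⟩
  · rintro u ⟨a, b, ⟨ha1, ha2⟩, ⟨hb1, hb2⟩, rfl⟩
    nlinarith [sq_nonneg h]

/-- The min-max value of the robust hedging problem over the box uncertainty set equals
`(σS² + ΘS) − σSF² / (σF² + ΘF)`. -/
theorem robust_minmax_value (σSF σS2 σF2 ΘS ΘF : ℝ) (hΘS : 0 ≤ ΘS) (hΘF : 0 ≤ ΘF)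
    (hF : 0 < σF2 + ΘF) :
    IsLeast
      {v : ℝ | ∃ h : ℝ, IsGreatest
        {u : ℝ | ∃ a b : ℝ, a ∈ Set.Icc (σS2 - ΘS) (σS2 + ΘS) ∧
          b ∈ Set.Icc (σF2 - ΘF) (σF2 + ΘF) ∧ u = a + h ^ 2 * b - 2 * h * σSF} v}
      ((σS2 + ΘS) - σSF ^ 2 / (σF2 + ΘF)) := by
  constructor
  · refine ⟨σSF / (σF2 + ΘF), ?_⟩
    have key : (σS2 + ΘS) - σSF ^ 2 / (σF2 + ΘF) =
        (σS2 + ΘS) + (σSF / (σF2 + ΘF)) ^ 2 * (σF2 + ΘF)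
          - 2 * (σSF / (σF2 + ΘF)) * σSF := by
      field_simp
      ring
    rw [key]
    exact inner_max σSF σS2 σF2 ΘS ΘF hΘS hΘF _
  · rintro v ⟨h, hv⟩
    have h1 := hv.2 (inner_max σSF σS2 σF2 ΘS ΘF hΘS hΘF h).1
    have h2 : (σS2 + ΘS) - σSF ^ 2 / (σF2 + ΘF) ≤
        (σS2 + ΘS) + h ^ 2 * (σF2 + ΘF) - 2 * h * σSF := by
      have hd : σSF ^ 2 / (σF2 + ΘF) * (σF2 + ΘF) = σSF ^ 2 :=
        div_mul_cancel₀ _ hF.ne'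
      nlinarith [sq_nonneg (h * (σF2 + ΘF) - σSF), hF]
    linarith
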